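/- Let n ≥ 2, let L ⊂ ℝ^{n−1} be a convex body with 0 ∈ int L, and let K ⊂ ℝⁿ be a convex body. Let π : ℝⁿ → ℝ^{n−1} be the orthogonal projection onto the first n−1 coordinates. Then ξ_L(π(K)) ≥ ξ_{L×[−1,1]}(K): every closed polygonal line in ℝ^{n−1} that does not fit into a translate of int π(K), viewed in the hyperplane ℝ^{n−1}×{0}, has ‖·‖_{L×[−1,1]}-length at least ξ_{L×[−1,1]}(K). -/

import Mathlib

open scoped BigOperators Pointwise RealInnerProductSpace
open MeasureTheory

noncomputable section

/-- The support-function "norm" `‖q‖_T = max_{p ∈ T} ⟨p, q⟩`. -/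
def suppNorm {d : ℕ} (T : Set (EuclideanSpace ℝ (Fin d)))
    (q : EuclideanSpace ℝ (Fin d)) : ℝ :=
  sSup ((fun p : EuclideanSpace ℝ (Fin d) => ⟪p, q⟫) '' T)

/-- Cyclic successor on `Fin m`. -/
def cyc {m : ℕ} (i : Fin m) : Fin m := ⟨(i.val + 1) % m, Nat.mod_lt _ i.pos⟩

/-- The `T`-length of the closed polygonal line through `q 0, …, q (m-1)`. -/
def polyLen {d : ℕ} (T : Set (EuclideanSpace ℝ (Fin d))) {m : ℕ}
    (q : Fin m → EuclideanSpace ℝ (Fin d)) : ℝ :=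
  ∑ i : Fin m, suppNorm T (q (cyc i) - q i)

/-- `q` does not fit into a translate of the interior of `K`. -/
def NotFit {d : ℕ} (K : Set (EuclideanSpace ℝ (Fin d))) {m : ℕ}
    (q : Fin m → EuclideanSpace ℝ (Fin d)) : Prop :=
  ∀ t : EuclideanSpace ℝ (Fin d), ¬ (∀ i, q i - t ∈ interior K)

/-- `ξ_T(K)`: the infimum of `T`-lengths of closed polygonal lines not fitting into a
translate of the interior of `K`. -/
def xi {d : ℕ} (T K : Set (EuclideanSpace ℝ (Fin d))) : ℝ :=
  sInf { L : ℝ | ∃ m : ℕ, 2 ≤ m ∧ ∃ q : Fin m → EuclideanSpace ℝ (Fin d),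
    NotFit K q ∧ L = polyLen T q }

/-- A convex body: compact, convex, with nonempty interior. -/
def IsConvexBody {d : ℕ} (K : Set (EuclideanSpace ℝ (Fin d))) : Prop :=
  IsCompact K ∧ Convex ℝ K ∧ (interior K).Nonempty

/-- The polar set `S° = {p : ⟨p, q⟩ ≤ 1 ∀ q ∈ S}`. -/
def polarSet {d : ℕ} (S : Set (EuclideanSpace ℝ (Fin d))) :
    Set (EuclideanSpace ℝ (Fin d)) :=
  { p | ∀ q ∈ S, ⟪p, q⟫ ≤ 1 }

/-- The permutohedron: the Minkowski sum of all edges of the simplex with vertices `v`. -/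
def permutohedron {n : ℕ} (v : Fin (n + 1) → EuclideanSpace ℝ (Fin n)) :
    Set (EuclideanSpace ℝ (Fin n)) :=
  ∑ p ∈ Finset.univ.filter (fun p : Fin (n + 1) × Fin (n + 1) => p.1 < p.2),
    segment ℝ (v p.1) (v p.2)

end

/-- The Lagrangian-product body `L × [-1,1] ⊆ ℝᵐ × ℝ = ℝ^{m+1}`. -/
def prodSeg {m : ℕ} (L : Set (EuclideanSpace ℝ (Fin m))) :
    Set (EuclideanSpace ℝ (Fin (m + 1))) :=
  { x | (show EuclideanSpace ℝ (Fin m) from WithLp.toLp 2 (fun i : Fin m => x i.castSucc)) ∈ L ∧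
        |x (Fin.last m)| ≤ 1 }

/-- The orthogonal projection `ℝ^{m+1} → ℝᵐ` onto the first `m` coordinates. -/
def projFirst {m : ℕ} (x : EuclideanSpace ℝ (Fin (m + 1))) : EuclideanSpace ℝ (Fin m) :=
  WithLp.toLp 2 (fun i : Fin m => x i.castSucc)

/-
A closed polygon in `ℝᵐ` that does not fit into a translate of `int π(K)` is lifted to the
hyperplane `ℝᵐ × {0}`. The lift does not fit into a translate of `int K`, since `π` is an open
map and so sends `int K` into `int π(K)`; and it has the same length, since
`⟨p, (v, 0)⟩ = ⟨π p, v⟩` and `π (L × [-1, 1]) = L`. Thus every length competing for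
`ξ_L(π(K))` also competes for `ξ_{L×[-1,1]}(K)`.
-/

variable {d m : ℕ}

theorem suppNorm_nonneg {T : Set (EuclideanSpace ℝ (Fin d))} (hT : 0 ∈ T)
    (q : EuclideanSpace ℝ (Fin d)) : 0 ≤ suppNorm T q := by
  by_cases hbdd : BddAbove ((fun p : EuclideanSpace ℝ (Fin d) => ⟪p, q⟫) '' T)
  · exact le_csSup_of_le hbdd ⟨0, hT, rfl⟩ (inner_zero_left q).ge
  · -- junk value: `sSup` of a set that is not bounded above is `0` in `ℝ`
    exact (Real.sSup_of_not_bddAbove hbdd).ge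

theorem polyLen_nonneg {T : Set (EuclideanSpace ℝ (Fin d))} (hT : 0 ∈ T) {k : ℕ}
    (q : Fin k → EuclideanSpace ℝ (Fin d)) : 0 ≤ polyLen T q :=
  Finset.sum_nonneg fun _ _ => suppNorm_nonneg hT _

theorem notFit_pair_of_diam_lt {S : Set (EuclideanSpace ℝ (Fin d))} (hS : Bornology.IsBounded S)
    {x y : EuclideanSpace ℝ (Fin d)} (hxy : Metric.diam S < dist x y) : NotFit S ![x, y] := by
  intro t ht
  have hx : x - t ∈ S := interior_subset (ht 0)
  have hy : y - t ∈ S := interior_subset (ht 1)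
  have := Metric.dist_le_diam_of_mem hS hx hy
  rw [dist_sub_right] at this
  linarith

theorem exists_notFit_of_isBounded (hd : 1 ≤ d) {S : Set (EuclideanSpace ℝ (Fin d))}
    (hS : Bornology.IsBounded S) : ∃ q : Fin 2 → EuclideanSpace ℝ (Fin d), NotFit S q := by
  refine ⟨![0, EuclideanSpace.single ⟨0, hd⟩ (Metric.diam S + 1)], notFit_pair_of_diam_lt hS ?_⟩
  rw [dist_zero_left, PiLp.norm_single, Real.norm_of_nonneg (by positivity)]
  exact lt_add_one _

def projFirstₗ : EuclideanSpace ℝ (Fin (m + 1)) →ₗ[ℝ] EuclideanSpace ℝ (Fin m) where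
  toFun := projFirst
  map_add' _ _ := by ext; simp [projFirst]
  map_smul' _ _ := by ext; simp [projFirst]

def snocZero : EuclideanSpace ℝ (Fin m) →ₗ[ℝ] EuclideanSpace ℝ (Fin (m + 1)) where
  toFun v := WithLp.toLp 2 (Fin.snoc (α := fun _ => ℝ) v.ofLp 0)
  map_add' _ _ := by ext i; refine Fin.lastCases ?_ (fun j => ?_) i <;> simp
  map_smul' _ _ := by ext i; refine Fin.lastCases ?_ (fun j => ?_) i <;> simp

theorem projFirst_sub (x y : EuclideanSpace ℝ (Fin (m + 1))) :
    projFirst (x - y) = projFirst x - projFirst y :=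
  map_sub projFirstₗ x y

@[simp]
theorem projFirst_snocZero (v : EuclideanSpace ℝ (Fin m)) : projFirst (snocZero v) = v := by
  ext i
  simp [projFirst, snocZero]

theorem inner_snocZero (p : EuclideanSpace ℝ (Fin (m + 1))) (v : EuclideanSpace ℝ (Fin m)) :
    ⟪p, snocZero v⟫ = ⟪projFirst p, v⟫ := by
  simp [PiLp.inner_apply, Fin.sum_univ_castSucc, snocZero, projFirst]

theorem projFirst_image_interior_subset (K : Set (EuclideanSpace ℝ (Fin (m + 1)))) :
    projFirst '' interior K ⊆ interior (projFirst '' K) :=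
  (projFirstₗ.isOpenMap_of_finiteDimensional
    fun v => ⟨snocZero v, projFirst_snocZero v⟩).image_interior_subset K

theorem snocZero_mem_prodSeg {L : Set (EuclideanSpace ℝ (Fin m))}
    {v : EuclideanSpace ℝ (Fin m)} (hv : v ∈ L) : snocZero v ∈ prodSeg L := by
  refine ⟨?_, by simp [snocZero]⟩
  change projFirst (snocZero v) ∈ L
  rwa [projFirst_snocZero]

theorem projFirst_image_prodSeg (L : Set (EuclideanSpace ℝ (Fin m))) :
    projFirst '' prodSeg L = L :=
  subset_antisymm (Set.image_subset_iff.2 fun _ hp => hp.1)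
    fun v hv => ⟨snocZero v, snocZero_mem_prodSeg hv, projFirst_snocZero v⟩

theorem suppNorm_prodSeg_snocZero (L : Set (EuclideanSpace ℝ (Fin m)))
    (v : EuclideanSpace ℝ (Fin m)) : suppNorm (prodSeg L) (snocZero v) = suppNorm L v := by
  simp only [suppNorm, inner_snocZero]
  rw [← Set.image_image (fun p => ⟪p, v⟫), projFirst_image_prodSeg]

theorem polyLen_prodSeg_snocZero (L : Set (EuclideanSpace ℝ (Fin m))) {k : ℕ}
    (q : Fin k → EuclideanSpace ℝ (Fin m)) : polyLen (prodSeg L) (snocZero ∘ q) = polyLen L q :=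
  Finset.sum_congr rfl fun i _ => by
    rw [Function.comp_apply, Function.comp_apply, ← map_sub, suppNorm_prodSeg_snocZero]

theorem NotFit.snocZero {K : Set (EuclideanSpace ℝ (Fin (m + 1)))} {k : ℕ}
    {q : Fin k → EuclideanSpace ℝ (Fin m)} (hq : NotFit (projFirst '' K) q) :
    NotFit K (snocZero ∘ q) := fun t ht => hq (projFirst t) fun i => by
  simpa [projFirst_sub] using projFirst_image_interior_subset K ⟨_, ht i, rfl⟩

theorem xi_projection_ge_general (m : ℕ) (hm : 1 ≤ m)
    (L : Set (EuclideanSpace ℝ (Fin m)))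
    (h0 : (0 : EuclideanSpace ℝ (Fin m)) ∈ interior L)
    (K : Set (EuclideanSpace ℝ (Fin (m + 1)))) (hK : IsConvexBody K) :
    xi L (projFirst '' K) ≥ xi (prodSeg L) K := by
  have h0' : (0 : EuclideanSpace ℝ (Fin (m + 1))) ∈ prodSeg L := by
    simpa using snocZero_mem_prodSeg (interior_subset h0)
  obtain ⟨q₀, hq₀⟩ := exists_notFit_of_isBounded hm
    (hK.1.image projFirstₗ.continuous_of_finiteDimensional).isBounded
  apply csInf_le_csInf
  · exact ⟨0, by rintro _ ⟨_, _, q, _, rfl⟩; exact polyLen_nonneg h0' q⟩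
  · exact ⟨_, 2, le_rfl, q₀, hq₀, rfl⟩
  · rintro _ ⟨k, hk, q, hq, rfl⟩
    exact ⟨k, hk, snocZero ∘ q, hq.snocZero, (polyLen_prodSeg_snocZero L q).symm⟩

/-- `ξ_L(π(K)) ≥ ξ_{L×[-1,1]}(K)` for the orthogonal projection `π` onto
the first `n - 1 = m` coordinates. -/
theorem xi_projection_ge (m : ℕ) (hm : 1 ≤ m)
    (L : Set (EuclideanSpace ℝ (Fin m))) (hL : IsConvexBody L)
    (h0 : (0 : EuclideanSpace ℝ (Fin m)) ∈ interior L)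
    (K : Set (EuclideanSpace ℝ (Fin (m + 1)))) (hK : IsConvexBody K) :
    xi L (projFirst '' K) ≥ xi (prodSeg L) K :=
  xi_projection_ge_general m hm L h0 K hK
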